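/- arXiv:1912.05335 — 2 statements merged into one kernel-verified Lean document; each statement's English description precedes it below -/
import Mathlib

section
/- Let n ≥ 2, N = 2^n, let p : {0,…,N−1} → ℝ satisfy p_i ≥ 0 and Σ_i p_i = 1, and define the marginals p^k_j (0 ≤ k ≤ n, 0 ≤ j < 2^k) by p^n = p and p^k_j = p^{k+1}_{2j} + p^{k+1}_{2j+1}, and the angles α^k_j = arccos √(p^{k+1}_{2j}/p^k_j) when p^k_j > 0 and α^k_j = 0 when p^k_j = 0 (so p^0_0 = 1). Let t ≥ 1 be an integer and let α̃^k_j ∈ ℝ satisfy α̃^0_0 = α^0_0 and |α̃^k_j − α^k_j| ≤ π/2^{t−1} for all 1 ≤ k ≤ n−1 and 0 ≤ j < 2^k. Define x̃^1 = (cos α̃^0_0, sin α̃^0_0) ∈ ℝ^2 and recursively x̃^{k+1}_{2j} = x̃^k_j cos α̃^k_j, x̃^{k+1}_{2j+1} = x̃^k_j sin α̃^k_j for 1 ≤ k ≤ n−1. Then the Euclidean distance between x̃^n and the vector x_R = (√p_0, …, √p_{N−1}) satisfies ‖x_R − x̃^n‖ ≤ (n−1)√2·π/2^{t−1}. In particular,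 for every ε > 0, if t = ⌈log₂((n−1)√2·π/ε)⌉ + 1 then ‖x_R − x̃^n‖ ≤ ε. -/
/-- The index `2j : Fin (2^(k+1))` of an index `j : Fin (2^k)`. -/
def dbl {k : ℕ} (j : Fin (2 ^ k)) : Fin (2 ^ (k + 1)) :=
  ⟨2 * j.val, by have := j.isLt; simp only [pow_succ]; omega⟩

/-- The index `2j+1 : Fin (2^(k+1))` of an index `j : Fin (2^k)`. -/
def dbl1 {k : ℕ} (j : Fin (2 ^ k)) : Fin (2 ^ (k + 1)) :=
  ⟨2 * j.val + 1, by have := j.isLt; simp only [pow_succ]; omega⟩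

/-!
Both amplitude vectors are built by the same recursion: every entry `v` at level `k` is split
into `(v cos θ, v sin θ)` at positions `2j, 2j+1` of level `k + 1`. For `x_R` the angles are the
exact `α^k_j`, because `√p^{k+1}_{2j} = √p^k_j cos α^k_j` and
`√p^{k+1}_{2j+1} = √p^k_j sin α^k_j`; for `x̃` they are the approximations `α̃^k_j`. Splitting
preserves the Euclidean norm, so every `x̃^k` is a unit vector, and by the triangle inequality
one level adds to the error at most the chord `‖(cos α, sin α) - (cos α̃, sin α̃)‖ ≤ |α - α̃|`
times `‖x̃^k‖ = 1`. Level `0` is exact, so `n - 1` levels contribute at most `π / 2^(t-1)` each.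
-/

open Real Finset

theorem sum_fin_two_pow_succ {M : Type*} [AddCommMonoid M] {k : ℕ} (f : Fin (2 ^ (k + 1)) → M) :
    ∑ i, f i = ∑ j, (f (dbl j) + f (dbl1 j)) := by
  let e : Fin (2 ^ k) × Fin 2 ≃ Fin (2 ^ (k + 1)) :=
    finProdFinEquiv.trans (finCongr (pow_succ 2 k).symm)
  have he0 (j : Fin (2 ^ k)) : e (j, 0) = dbl j := Fin.ext <| by simp [e, dbl, mul_comm]
  have he1 (j : Fin (2 ^ k)) : e (j, 1) = dbl1 j := Fin.ext <| by simp [e, dbl1, mul_comm, add_comm]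
  rw [← e.sum_comp, Fintype.sum_prod_type]
  simp only [Fin.sum_univ_two, he0, he1]

theorem sqrt_sum_sq_add_le {ι : Type*} [Fintype ι] (v w : ι → ℝ) :
    √(∑ i, (v i + w i) ^ 2) ≤ √(∑ i, v i ^ 2) + √(∑ i, w i ^ 2) := by
  simpa [EuclideanSpace.norm_eq] using
    norm_add_le (WithLp.toLp 2 v : EuclideanSpace ℝ ι) (WithLp.toLp 2 w)

theorem sqrt_sum_pair_add_le {ι : Type*} [Fintype ι] (u u' w w' : ι → ℝ) :
    √(∑ j, ((u j + w j) ^ 2 + (u' j + w' j) ^ 2)) ≤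
      √(∑ j, (u j ^ 2 + u' j ^ 2)) + √(∑ j, (w j ^ 2 + w' j ^ 2)) := by
  simpa only [Fintype.sum_sum_type, Sum.elim_inl, Sum.elim_inr, ← sum_add_distrib]
    using sqrt_sum_sq_add_le (Sum.elim u u') (Sum.elim w w')

theorem cos_sub_cos_sq_add_sin_sub_sin_sq_le (a b : ℝ) :
    (cos a - cos b) ^ 2 + (sin a - sin b) ^ 2 ≤ (a - b) ^ 2 := by
  have := one_sub_sq_div_two_le_cos (x := a - b)
  rw [cos_sub] at this
  nlinarith [cos_sq_add_sin_sq a, cos_sq_add_sin_sq b]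

theorem sqrt_eq_mul_cos_and_sqrt_eq_mul_sin {a b θ : ℝ} (ha : 0 ≤ a) (hb : 0 ≤ b)
    (hθ : 0 < a + b → θ = arccos √(a / (a + b))) :
    √a = √(a + b) * cos θ ∧ √b = √(a + b) * sin θ := by
  rcases (add_nonneg ha hb).lt_or_eq with hab | hab
  · have hq0 : 0 ≤ a / (a + b) := by positivity
    have hq1 : a / (a + b) ≤ 1 := (div_le_one hab).2 (by linarith)
    have h1q : 1 - a / (a + b) = b / (a + b) := by field_simp; ring
    rw [hθ hab, cos_arccos (by linarith [sqrt_nonneg (a / (a + b))]) (sqrt_le_one.2 hq1),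
      sin_arccos, sq_sqrt hq0, h1q, ← sqrt_mul hab.le, ← sqrt_mul hab.le,
      mul_div_cancel₀ _ hab.ne', mul_div_cancel₀ _ hab.ne']
    exact ⟨rfl, rfl⟩
  · obtain ⟨rfl, rfl⟩ : a = 0 ∧ b = 0 := ⟨by linarith, by linarith⟩
    simp

theorem div_two_pow_le_of_eq_ceil_logb {C ε : ℝ} {t : ℕ} (hε : 0 < ε)
    (ht : (t : ℤ) = ⌈logb 2 (C / ε)⌉ + 1) : C / 2 ^ (t - 1) ≤ ε := by
  rcases le_or_gt C 0 with hC | hC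
  · exact (div_nonpos_of_nonpos_of_nonneg hC (by positivity)).trans hε.le
  have hlog : logb 2 (C / ε) ≤ ((t - 1 : ℕ) : ℝ) := by
    have h := Int.le_ceil (logb 2 (C / ε))
    have : ((⌈logb 2 (C / ε)⌉ : ℤ) : ℝ) ≤ ((t - 1 : ℕ) : ℝ) := by
      exact_mod_cast (show ⌈logb 2 (C / ε)⌉ ≤ ((t - 1 : ℕ) : ℤ) by omega)
    linarith
  have h : C / ε ≤ 2 ^ (t - 1) := by
    rw [← rpow_natCast]
    calc C / ε = 2 ^ logb 2 (C / ε) := (rpow_logb two_pos (by norm_num) (by positivity)).symm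
      _ ≤ _ := rpow_le_rpow_of_exponent_le one_le_two hlog
  rw [div_le_iff₀ (by positivity)]
  rw [div_le_iff₀ hε] at h
  linarith

section Marginals

variable {n : ℕ} {pm : ∀ k : ℕ, Fin (2 ^ k) → ℝ}

theorem marginal_nonneg
    (hpm : ∀ k, k < n → ∀ j, pm k j = pm (k + 1) (dbl j) + pm (k + 1) (dbl1 j))
    (hn : ∀ i, 0 ≤ pm n i) {k : ℕ} (hk : k ≤ n) (j : Fin (2 ^ k)) : 0 ≤ pm k j := by
  induction hk using Nat.decreasingInduction with
  | self => exact hn j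
  | of_succ k hk ih => rw [hpm k hk j]; exact add_nonneg (ih _) (ih _)

theorem sum_marginal
    (hpm : ∀ k, k < n → ∀ j, pm k j = pm (k + 1) (dbl j) + pm (k + 1) (dbl1 j))
    {k : ℕ} (hk : k ≤ n) : ∑ j, pm k j = ∑ i, pm n i := by
  induction hk using Nat.decreasingInduction with
  | self => rfl
  | of_succ k hk ih => rw [← ih, sum_fin_two_pow_succ]; exact sum_congr rfl fun j _ => hpm k hk j

def IsAngleSplit {k : ℕ} (x θ : Fin (2 ^ k) → ℝ) (y : Fin (2 ^ (k + 1)) → ℝ) : Prop :=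
  ∀ j, y (dbl j) = x j * cos (θ j) ∧ y (dbl1 j) = x j * sin (θ j)

theorem isAngleSplit_sqrt_marginal {α : ∀ k : ℕ, Fin (2 ^ k) → ℝ}
    (hpm : ∀ k, k < n → ∀ j, pm k j = pm (k + 1) (dbl j) + pm (k + 1) (dbl1 j))
    (hα : ∀ k, k < n → ∀ j, 0 < pm k j → α k j = arccos √(pm (k + 1) (dbl j) / pm k j))
    (hn : ∀ i, 0 ≤ pm n i) {k : ℕ} (hk : k < n) :
    IsAngleSplit (fun j => √(pm k j)) (α k) (fun i => √(pm (k + 1) i)) := fun j => by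
  have := sqrt_eq_mul_cos_and_sqrt_eq_mul_sin (marginal_nonneg hpm hn hk (dbl j))
    (marginal_nonneg hpm hn hk (dbl1 j)) (by rw [← hpm k hk j]; exact hα k hk j)
  rwa [← hpm k hk j] at this

end Marginals

namespace IsAngleSplit

variable {k : ℕ} {x θ : Fin (2 ^ k) → ℝ} {y : Fin (2 ^ (k + 1)) → ℝ}

theorem sum_sq_eq (h : IsAngleSplit x θ y) : ∑ i, y i ^ 2 = ∑ j, x j ^ 2 := by
  rw [sum_fin_two_pow_succ]
  refine sum_congr rfl fun j _ => ?_
  rw [(h j).1, (h j).2]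
  linear_combination x j ^ 2 * cos_sq_add_sin_sq (θ j)

theorem sqrt_sum_sq_sub_le {w φ : Fin (2 ^ k) → ℝ} {z : Fin (2 ^ (k + 1)) → ℝ} {δ : ℝ}
    (hy : IsAngleSplit x θ y) (hz : IsAngleSplit w φ z) (hδ : ∀ j, |θ j - φ j| ≤ δ) :
    √(∑ i, (y i - z i) ^ 2) ≤ √(∑ j, (x j - w j) ^ 2) + δ * √(∑ j, w j ^ 2) := by
  have hδ0 : 0 ≤ δ := (abs_nonneg _).trans (hδ ⟨0, Nat.two_pow_pos k⟩)
  have hsplit : ∑ i, (y i - z i) ^ 2 =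
      ∑ j, (((x j - w j) * cos (θ j) + w j * (cos (θ j) - cos (φ j))) ^ 2 +
        ((x j - w j) * sin (θ j) + w j * (sin (θ j) - sin (φ j))) ^ 2) := by
    rw [sum_fin_two_pow_succ]
    refine sum_congr rfl fun j _ => ?_
    rw [(hy j).1, (hy j).2, (hz j).1, (hz j).2]
    ring
  have hrot : ∑ j, (((x j - w j) * cos (θ j)) ^ 2 + ((x j - w j) * sin (θ j)) ^ 2) =
      ∑ j, (x j - w j) ^ 2 :=
    sum_congr rfl fun j _ => by linear_combination (x j - w j) ^ 2 * cos_sq_add_sin_sq (θ j)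
  have hchord : ∑ j, ((w j * (cos (θ j) - cos (φ j))) ^ 2 +
      (w j * (sin (θ j) - sin (φ j))) ^ 2) ≤ δ ^ 2 * ∑ j, w j ^ 2 := by
    rw [mul_sum]
    refine sum_le_sum fun j _ => ?_
    have hθφ : (θ j - φ j) ^ 2 ≤ δ ^ 2 := by
      rw [← sq_abs]
      exact pow_le_pow_left₀ (abs_nonneg _) (hδ j) 2
    calc _ = w j ^ 2 * ((cos (θ j) - cos (φ j)) ^ 2 + (sin (θ j) - sin (φ j)) ^ 2) := by ring
      _ ≤ w j ^ 2 * δ ^ 2 := by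
        gcongr
        exact (cos_sub_cos_sq_add_sin_sub_sin_sq_le _ _).trans hθφ
      _ = δ ^ 2 * w j ^ 2 := mul_comm _ _
  rw [hsplit]
  refine (sqrt_sum_pair_add_le _ _ _ _).trans ?_
  rw [hrot]
  gcongr
  calc _ ≤ √(δ ^ 2 * ∑ j, w j ^ 2) := sqrt_le_sqrt hchord
    _ = δ * √(∑ j, w j ^ 2) := by rw [sqrt_mul' _ (by positivity), sqrt_sq hδ0]

end IsAngleSplit

section Chain

variable {x y θ φ : ∀ k : ℕ, Fin (2 ^ k) → ℝ} {m n : ℕ}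

theorem sum_sq_eq_of_isAngleSplit (hmn : m ≤ n)
    (hx : ∀ k, m ≤ k → k < n → IsAngleSplit (x k) (θ k) (x (k + 1))) :
    ∑ i, x n i ^ 2 = ∑ i, x m i ^ 2 := by
  induction n, hmn using Nat.le_induction with
  | base => rfl
  | succ n hmn ih =>
    rw [(hx n hmn n.lt_succ_self).sum_sq_eq, ih fun k hk hkn => hx k hk (hkn.trans n.lt_succ_self)]

theorem sqrt_sum_sq_sub_le_of_isAngleSplit {δ : ℝ} (hmn : m ≤ n)
    (hy : ∀ k, m ≤ k → k < n → IsAngleSplit (y k) (θ k) (y (k + 1)))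
    (hx : ∀ k, m ≤ k → k < n → IsAngleSplit (x k) (φ k) (x (k + 1)))
    (hδ : ∀ k, m ≤ k → k < n → ∀ j, |θ k j - φ k j| ≤ δ) :
    √(∑ i, (y n i - x n i) ^ 2) ≤
      √(∑ i, (y m i - x m i) ^ 2) + (n - m) * δ * √(∑ i, x m i ^ 2) := by
  induction n, hmn using Nat.le_induction with
  | base => simp
  | succ n hmn ih =>
    have hlt := n.lt_succ_self
    have ih := ih (fun k hk hkn => hy k hk (hkn.trans hlt))
      (fun k hk hkn => hx k hk (hkn.trans hlt)) (fun k hk hkn => hδ k hk (hkn.trans hlt))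
    have hnorm := sum_sq_eq_of_isAngleSplit hmn fun k hk hkn => hx k hk (hkn.trans hlt)
    calc _ ≤ √(∑ i, (y n i - x n i) ^ 2) + δ * √(∑ i, x n i ^ 2) :=
          (hy n hmn hlt).sqrt_sum_sq_sub_le (hx n hmn hlt) (hδ n hmn hlt)
      _ ≤ _ := by
        rw [hnorm]
        push_cast
        linarith

end Chain

theorem deterministic_fidelity_general (n t : ℕ) (hn : 2 ≤ n)
    (p : Fin (2 ^ n) → ℝ) (hp0 : ∀ i, 0 ≤ p i) (hp1 : ∑ i, p i = 1)
    (pm : ∀ k : ℕ, Fin (2 ^ k) → ℝ)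
    (hpmn : pm n = p)
    (hpm : ∀ k, k < n → ∀ j : Fin (2 ^ k),
      pm k j = pm (k + 1) (dbl j) + pm (k + 1) (dbl1 j))
    (α : ∀ k : ℕ, Fin (2 ^ k) → ℝ)
    (hα : ∀ k, k < n → ∀ j : Fin (2 ^ k),
      (0 < pm k j →
        α k j = Real.arccos (Real.sqrt (pm (k + 1) (dbl j) / pm k j))) ∧
      (pm k j = 0 → α k j = 0))
    (αt : ∀ k : ℕ, Fin (2 ^ k) → ℝ)
    (hαt0 : αt 0 = α 0)
    (hαt : ∀ k, 1 ≤ k → k ≤ n - 1 → ∀ j : Fin (2 ^ k),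
      |αt k j - α k j| ≤ Real.pi / 2 ^ (t - 1))
    (xt : ∀ k : ℕ, Fin (2 ^ k) → ℝ)
    (hxt1 : ∀ j : Fin (2 ^ 1),
      xt 1 j = if j.val = 0 then Real.cos (αt 0 0) else Real.sin (αt 0 0))
    (hxtrec : ∀ k, 1 ≤ k → k ≤ n - 1 → ∀ j : Fin (2 ^ k),
      xt (k + 1) (dbl j) = xt k j * Real.cos (αt k j) ∧
      xt (k + 1) (dbl1 j) = xt k j * Real.sin (αt k j)) :
    Real.sqrt (∑ i, (Real.sqrt (p i) - xt n i) ^ 2) ≤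
      ((n : ℝ) - 1) * Real.sqrt 2 * Real.pi / 2 ^ (t - 1) ∧
    ∀ ε : ℝ, 0 < ε →
      (t : ℤ) = ⌈Real.logb 2 (((n : ℝ) - 1) * Real.sqrt 2 * Real.pi / ε)⌉ + 1 →
      Real.sqrt (∑ i, (Real.sqrt (p i) - xt n i) ^ 2) ≤ ε := by
  have : Subsingleton (Fin (2 ^ 0)) := Fin.subsingleton_one
  have hpm0 (j : Fin (2 ^ 0)) : pm 0 j = 1 := by
    rw [← hp1, ← hpmn, ← sum_marginal hpm (Nat.zero_le n), Fintype.sum_subsingleton _ j]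
  have hy (k : ℕ) (hk : k < n) := isAngleSplit_sqrt_marginal hpm (fun k hk j => (hα k hk j).1)
    (hpmn ▸ hp0) hk
  have hx0 : IsAngleSplit (fun _ => 1) (αt 0) (xt 1) := fun j => by
    obtain rfl : j = 0 := Subsingleton.elim _ _
    simp [hxt1, dbl, dbl1]
  have hbase : √(∑ i, (√(pm 1 i) - xt 1 i) ^ 2) = 0 := by
    have := (hy 0 (by omega)).sqrt_sum_sq_sub_le hx0 (δ := 0) fun j => by simp [hαt0]
    exact le_antisymm (by simpa [hpm0] using this) (sqrt_nonneg _)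
  have hxt_norm : ∑ i, xt 1 i ^ 2 = 1 := by rw [hx0.sum_sq_eq]; simp
  have hchain := sqrt_sum_sq_sub_le_of_isAngleSplit (y := fun k j => √(pm k j)) (θ := α)
    (δ := π / 2 ^ (t - 1)) (by omega : 1 ≤ n) (fun k _ hk => hy k hk)
    (fun k hk1 hkn => hxtrec k hk1 (by omega))
    (fun k hk1 hkn j => by rw [abs_sub_comm]; exact hαt k hk1 (by omega) j)
  simp only [hpmn, hbase, hxt_norm, sqrt_one, mul_one, zero_add, Nat.cast_one] at hchain
  have hbound :
      √(∑ i, (√(p i) - xt n i) ^ 2) ≤ ((n : ℝ) - 1) * √2 * π / 2 ^ (t - 1) := by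
    have hn1 : (1 : ℝ) ≤ n := by exact_mod_cast (by omega : 1 ≤ n)
    calc _ ≤ ((n : ℝ) - 1) * (π / 2 ^ (t - 1)) := hchain
      _ ≤ ((n : ℝ) - 1) * (√2 * (π / 2 ^ (t - 1))) := by
        gcongr
        exact le_mul_of_one_le_left (by positivity) one_lt_sqrt_two.le
      _ = _ := by ring
  exact ⟨hbound, fun ε hε htε => hbound.trans (div_two_pow_le_of_eq_ceil_logb hε htε)⟩

/-- Fidelity bound for the deterministic state-preparation algorithm.
Given a probability vector `p` on `{0,…,2^n−1}` with marginals
`p^k_j = p^{k+1}_{2j} + p^{k+1}_{2j+1}`, angles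
`α^k_j = arccos √(p^{k+1}_{2j}/p^k_j)` (set to `0` when `p^k_j = 0`),
`t`-bit approximate angles `α̃^k_j` with `|α̃^k_j − α^k_j| ≤ π/2^{t−1}`, and
the iteratively constructed vector `x̃^n`, the Euclidean distance to the
target amplitude vector `x_R = (√p_0,…,√p_{2^n−1})` is at most
`(n−1)√2·π/2^{t−1}`; in particular it is at most `ε` for
`t = ⌈log₂((n−1)√2·π/ε)⌉ + 1`. -/
theorem deterministic_fidelity (n t : ℕ) (hn : 2 ≤ n) (ht : 1 ≤ t)
    (p : Fin (2 ^ n) → ℝ) (hp0 : ∀ i, 0 ≤ p i) (hp1 : ∑ i, p i = 1)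
    (pm : ∀ k : ℕ, Fin (2 ^ k) → ℝ)
    (hpmn : pm n = p)
    (hpm : ∀ k, k < n → ∀ j : Fin (2 ^ k),
      pm k j = pm (k + 1) (dbl j) + pm (k + 1) (dbl1 j))
    (α : ∀ k : ℕ, Fin (2 ^ k) → ℝ)
    (hα : ∀ k, k < n → ∀ j : Fin (2 ^ k),
      (0 < pm k j →
        α k j = Real.arccos (Real.sqrt (pm (k + 1) (dbl j) / pm k j))) ∧
      (pm k j = 0 → α k j = 0))
    (αt : ∀ k : ℕ, Fin (2 ^ k) → ℝ)
    (hαt0 : αt 0 = α 0)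
    (hαt : ∀ k, 1 ≤ k → k ≤ n - 1 → ∀ j : Fin (2 ^ k),
      |αt k j - α k j| ≤ Real.pi / 2 ^ (t - 1))
    (xt : ∀ k : ℕ, Fin (2 ^ k) → ℝ)
    (hxt1 : ∀ j : Fin (2 ^ 1),
      xt 1 j = if j.val = 0 then Real.cos (αt 0 0) else Real.sin (αt 0 0))
    (hxtrec : ∀ k, 1 ≤ k → k ≤ n - 1 → ∀ j : Fin (2 ^ k),
      xt (k + 1) (dbl j) = xt k j * Real.cos (αt k j) ∧
      xt (k + 1) (dbl1 j) = xt k j * Real.sin (αt k j)) :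
    Real.sqrt (∑ i, (Real.sqrt (p i) - xt n i) ^ 2) ≤
      ((n : ℝ) - 1) * Real.sqrt 2 * Real.pi / 2 ^ (t - 1) ∧
    ∀ ε : ℝ, 0 < ε →
      (t : ℤ) = ⌈Real.logb 2 (((n : ℝ) - 1) * Real.sqrt 2 * Real.pi / ε)⌉ + 1 →
      Real.sqrt (∑ i, (Real.sqrt (p i) - xt n i) ^ 2) ≤ ε :=
  deterministic_fidelity_general n t hn p hp0 hp1 pm hpmn hpm α hα αt hαt0 hαt xt hxt1 hxtrec
end

section
/- Let n ≥ 1, N = 2^n, let x ∈ ℝ^N be nonzero with x_i ≥ 0 for all i, and set α_i = arccos(x_i / max_j x_j). Let ε > 0 and set t = 2n + ⌈log₂(π/ε)⌉. If α̃_i ∈ ℝ satisfy 0 ≤ α̃_i ≤ α_i and α_i − α̃_i < π/2^{t+1} for all i, then: (i) (1/2^n)·Σ_i cos² α̃_i ≥ ‖x‖²/(2^n · max_i x_i²), and (ii) the unit vectors x_r = x/‖x‖ and x̃_r with entries cos α̃_i / √(Σ_j cos² α̃_j) satisfy ‖x_r − x̃_r‖ ≤ ε. -/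
/-- The largest entry `max_j x_j` of a vector `x : Fin (2^n) → ℝ`. -/
noncomputable def maxEntry (n : ℕ) (x : Fin (2 ^ n) → ℝ) : ℝ :=
  Finset.univ.sup' ⟨⟨0, Nat.two_pow_pos n⟩, Finset.mem_univ _⟩ x

/-!
With `m = max_j x_j` we have `cos α_i = x_i / m`, and `0 ≤ α̃_i ≤ α_i ≤ π` gives
`x_i / m ≤ cos α̃_i`, which is (i) termwise. For (ii), `x_r` and `x̃_r` are the normalizations of
`c = (cos α_i)_i` and `c̃ = (cos α̃_i)_i`. Since some `c_i = 1`, `‖c‖ ≥ 1`, and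
`‖c/‖c‖ - c̃/‖c̃‖‖ ≤ 2‖c - c̃‖/‖c‖ ≤ 2‖c - c̃‖`. As `cos` is 1-Lipschitz, every entry of `c - c̃`
is below `π/2^{t+1}`, so `2‖c - c̃‖ ≤ √(2^n) π/2^t`, which the choice of `t` makes at most `ε`.
-/

open Real Finset

lemma le_two_zpow_ceil_logb {y : ℝ} (hy : 0 < y) : y ≤ 2 ^ ⌈logb 2 y⌉ := by
  calc y = 2 ^ logb 2 y := (rpow_logb two_pos (by norm_num) hy).symm
    _ ≤ 2 ^ (⌈logb 2 y⌉ : ℝ) := rpow_le_rpow_of_exponent_le one_le_two (Int.le_ceil _)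
    _ = 2 ^ ⌈logb 2 y⌉ := rpow_intCast 2 _

lemma sqrt_two_pow_mul_pi_div_two_zpow_le (n : ℕ) {ε : ℝ} (hε : 0 < ε) {t : ℤ}
    (ht : 2 * n + ⌈logb 2 (π / ε)⌉ ≤ t) : √(2 ^ n) * (π / 2 ^ t) ≤ ε := by
  have hpow : (2 : ℝ) ^ (2 * n) * (π / ε) ≤ 2 ^ t :=
    calc (2 : ℝ) ^ (2 * n) * (π / ε) ≤ 2 ^ (2 * n : ℤ) * 2 ^ ⌈logb 2 (π / ε)⌉ := by
          rw [← zpow_natCast]; push_cast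
          gcongr; exact le_two_zpow_ceil_logb (by positivity)
      _ = 2 ^ (2 * n + ⌈logb 2 (π / ε)⌉) := (zpow_add₀ two_ne_zero _ _).symm
      _ ≤ 2 ^ t := zpow_le_zpow_right₀ one_le_two ht
  have hsqrt : √(2 ^ n) ≤ 2 ^ (2 * n) := by
    rw [sqrt_le_left (by positivity), ← pow_mul]
    exact pow_le_pow_right₀ one_le_two (by omega)
  calc √(2 ^ n) * (π / 2 ^ t) ≤ 2 ^ (2 * n) * (π / (2 ^ (2 * n) * (π / ε))) := by
        gcongr
    _ = ε := by field_simp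

lemma le_cos_of_le_arccos {y θ : ℝ} (hy₁ : -1 ≤ y) (hy₂ : y ≤ 1) (hθ : 0 ≤ θ)
    (h : θ ≤ arccos y) : y ≤ cos θ :=
  cos_arccos hy₁ hy₂ ▸ cos_le_cos_of_nonneg_of_le_pi hθ (arccos_le_pi y) h

lemma abs_sub_cos_le_arccos_sub {y θ : ℝ} (hy₁ : -1 ≤ y) (hy₂ : y ≤ 1) (h : θ ≤ arccos y) :
    |y - cos θ| ≤ arccos y - θ := by
  simpa [cos_arccos hy₁ hy₂, abs_of_nonneg (sub_nonneg.2 h)] using abs_cos_sub_cos_le (arccos y) θ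

lemma norm_inv_norm_smul_sub_le {E : Type*} [NormedAddCommGroup E] [NormedSpace ℝ E]
    {a : E} (ha : a ≠ 0) (b : E) :
    ‖‖a‖⁻¹ • a - ‖b‖⁻¹ • b‖ ≤ 2 * ‖a - b‖ / ‖a‖ := by
  have ha' : 0 < ‖a‖ := norm_pos_iff.mpr ha
  rcases eq_or_ne b 0 with rfl | hb
  · rw [smul_zero, sub_zero, sub_zero, norm_smul, norm_inv, norm_norm,
      inv_mul_cancel₀ ha'.ne', mul_div_assoc, div_self ha'.ne']
    norm_num
  have hb' : 0 < ‖b‖ := norm_pos_iff.mpr hb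
  have hsplit : ‖a‖⁻¹ • a - ‖b‖⁻¹ • b = ‖a‖⁻¹ • (a - b) + (‖a‖⁻¹ - ‖b‖⁻¹) • b := by
    rw [smul_sub, sub_smul]; abel
  have hscale : ‖(‖a‖⁻¹ - ‖b‖⁻¹) • b‖ = |‖b‖ - ‖a‖| / ‖a‖ := by
    rw [norm_smul, Real.norm_eq_abs, inv_sub_inv ha'.ne' hb'.ne', abs_div,
      abs_of_pos (mul_pos ha' hb')]
    field_simp
  calc ‖‖a‖⁻¹ • a - ‖b‖⁻¹ • b‖
      ≤ ‖‖a‖⁻¹ • (a - b)‖ + ‖(‖a‖⁻¹ - ‖b‖⁻¹) • b‖ := hsplit ▸ norm_add_le _ _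
    _ ≤ ‖a - b‖ / ‖a‖ + ‖a - b‖ / ‖a‖ := by
        rw [hscale, norm_smul, norm_inv, norm_norm, inv_mul_eq_div, abs_sub_comm]
        gcongr
        exact abs_norm_sub_norm_le a b
    _ = 2 * ‖a - b‖ / ‖a‖ := by ring

lemma inv_norm_smul_pos_smul {E : Type*} [NormedAddCommGroup E] [NormedSpace ℝ E] {c : ℝ}
    (hc : 0 < c) (v : E) : ‖c • v‖⁻¹ • (c • v) = ‖v‖⁻¹ • v := by
  rw [norm_smul, norm_of_nonneg hc.le, smul_smul, mul_inv_rev, inv_mul_cancel_right₀ hc.ne']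

namespace EuclideanSpace

variable {ι : Type*} [Fintype ι]

lemma norm_le_sqrt_card_mul (v : EuclideanSpace ℝ ι) {δ : ℝ} (hv : ∀ i, |v i| ≤ δ) :
    ‖v‖ ≤ √(Fintype.card ι) * δ := by
  rcases isEmpty_or_nonempty ι with hι | ⟨⟨i₀⟩⟩
  · simp [Subsingleton.elim v 0]
  have hδ : 0 ≤ δ := (abs_nonneg _).trans (hv i₀)
  rw [EuclideanSpace.norm_eq, ← sqrt_sq hδ, ← sqrt_mul (Nat.cast_nonneg _)]
  gcongr
  calc ∑ i, ‖v i‖ ^ 2 ≤ ∑ _i : ι, δ ^ 2 := by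
        gcongr with i; rw [norm_eq_abs]; exact hv i
    _ = _ := by simp

lemma norm_inv_norm_smul_sub_le_of_abs_sub_le {u v : EuclideanSpace ℝ ι} (hu : 1 ≤ ‖u‖)
    {δ : ℝ} (huv : ∀ i, |u i - v i| ≤ δ) :
    ‖‖u‖⁻¹ • u - ‖v‖⁻¹ • v‖ ≤ 2 * (√(Fintype.card ι) * δ) := by
  have hu₀ : u ≠ 0 := norm_pos_iff.mp (one_pos.trans_le hu)
  calc ‖‖u‖⁻¹ • u - ‖v‖⁻¹ • v‖ ≤ 2 * ‖u - v‖ / ‖u‖ := norm_inv_norm_smul_sub_le hu₀ v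
    _ ≤ 2 * ‖u - v‖ := div_le_self (by positivity) hu
    _ ≤ 2 * (√(Fintype.card ι) * δ) := by
        gcongr; exact norm_le_sqrt_card_mul _ huv

lemma sqrt_sum_sq_div_sqrt_sub_eq_norm (f g : ι → ℝ) :
    √(∑ i, (f i / √(∑ j, f j ^ 2) - g i / √(∑ j, g j ^ 2)) ^ 2) =
      ‖‖WithLp.toLp 2 f‖⁻¹ • WithLp.toLp 2 f - ‖WithLp.toLp 2 g‖⁻¹ • WithLp.toLp 2 g‖ := by
  simp [EuclideanSpace.norm_eq, div_eq_inv_mul]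

end EuclideanSpace

section maxEntry

variable {n : ℕ} (x : Fin (2 ^ n) → ℝ)

lemma le_maxEntry (i : Fin (2 ^ n)) : x i ≤ maxEntry n x :=
  Finset.le_sup' x (mem_univ i)

lemma exists_eq_maxEntry : ∃ i, x i = maxEntry n x := by
  obtain ⟨i, -, hi⟩ := exists_mem_eq_sup' univ_nonempty x
  exact ⟨i, hi.symm⟩

lemma maxEntry_pos (hx0 : x ≠ 0) (hxnn : ∀ i, 0 ≤ x i) : 0 < maxEntry n x := by
  obtain ⟨i, hi⟩ := Function.ne_iff.mp hx0
  exact ((hxnn i).lt_of_ne' hi).trans_le (le_maxEntry x i)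

end maxEntry

theorem probabilistic_preparation_general (n : ℕ)
    (x : Fin (2 ^ n) → ℝ) (hx0 : x ≠ 0) (hxnn : ∀ i, 0 ≤ x i)
    (α : Fin (2 ^ n) → ℝ)
    (hα : ∀ i, α i = Real.arccos (x i / maxEntry n x))
    (ε : ℝ) (hε : 0 < ε) (t : ℤ)
    (ht : t = 2 * n + ⌈Real.logb 2 (Real.pi / ε)⌉)
    (αt : Fin (2 ^ n) → ℝ)
    (hαt : ∀ i, 0 ≤ αt i ∧ αt i ≤ α i ∧
      α i - αt i < Real.pi / (2 : ℝ) ^ (t + 1)) :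
    (∑ i, x i ^ 2) / (2 ^ n * maxEntry n x ^ 2) ≤
      (1 / 2 ^ n) * ∑ i, Real.cos (αt i) ^ 2 ∧
    Real.sqrt (∑ i,
      (x i / Real.sqrt (∑ j, x j ^ 2) -
        Real.cos (αt i) / Real.sqrt (∑ j, Real.cos (αt j) ^ 2)) ^ 2) ≤ ε := by
  obtain ⟨i₀, hi₀⟩ := exists_eq_maxEntry x
  set m := maxEntry n x
  have hm : 0 < m := maxEntry_pos x hx0 hxnn
  have hnonneg : ∀ i, 0 ≤ x i / m := fun i => div_nonneg (hxnn i) hm.le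
  have hle_one : ∀ i, x i / m ≤ 1 := fun i => (div_le_one hm).2 (le_maxEntry x i)
  have hneg_one_le : ∀ i, -1 ≤ x i / m := fun i => (neg_nonpos.2 zero_le_one).trans (hnonneg i)
  have hαt_le : ∀ i, αt i ≤ arccos (x i / m) := fun i => hα i ▸ (hαt i).2.1
  refine ⟨?_, ?_⟩
  · calc (∑ i, x i ^ 2) / (2 ^ n * m ^ 2) = 1 / 2 ^ n * ∑ i, (x i / m) ^ 2 := by
          simp only [div_pow, ← Finset.sum_div]; field_simp
      _ ≤ 1 / 2 ^ n * ∑ i, cos (αt i) ^ 2 := by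
          gcongr with i
          exacts [hnonneg i, le_cos_of_le_arccos (hneg_one_le i) (hle_one i) (hαt i).1 (hαt_le i)]
  set C : EuclideanSpace ℝ (Fin (2 ^ n)) := WithLp.toLp 2 fun i => x i / m
  have hx : WithLp.toLp 2 x = m • C := by
    ext i; simp [C, mul_div_cancel₀ _ hm.ne']
  have hC : 1 ≤ ‖C‖ := by simpa [C, hi₀, hm.ne'] using PiLp.norm_apply_le C i₀
  have hCδ : ∀ i, |C i - cos (αt i)| ≤ π / 2 ^ (t + 1) := fun i =>
    (abs_sub_cos_le_arccos_sub (hneg_one_le i) (hle_one i) (hαt_le i)).trans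
      (hα i ▸ (hαt i).2.2).le
  rw [EuclideanSpace.sqrt_sum_sq_div_sqrt_sub_eq_norm, hx, inv_norm_smul_pos_smul hm]
  calc _ ≤ 2 * (√(Fintype.card (Fin (2 ^ n))) * (π / 2 ^ (t + 1))) :=
        EuclideanSpace.norm_inv_norm_smul_sub_le_of_abs_sub_le hC hCδ
    _ = √(2 ^ n) * (π / 2 ^ t) := by
        rw [Fintype.card_fin, zpow_add_one₀ two_ne_zero]; push_cast; field_simp
    _ ≤ ε := sqrt_two_pow_mul_pi_div_two_zpow_le n hε ht.ge

/-- Success probability and fidelity of the probabilistic state-preparation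
algorithm with `t = 2n + ⌈log₂(π/ε)⌉` bits of phase estimation: if the
approximate angles satisfy `0 ≤ α̃_i ≤ α_i` and `α_i − α̃_i < π/2^{t+1}`, then
(i) the success probability `(1/2^n)Σ cos² α̃_i` is at least
`‖x‖²/(2^n·max_i x_i²)`, and (ii) `‖x_r − x̃_r‖ ≤ ε`. -/
theorem probabilistic_preparation (n : ℕ) (hn : 1 ≤ n)
    (x : Fin (2 ^ n) → ℝ) (hx0 : x ≠ 0) (hxnn : ∀ i, 0 ≤ x i)
    (α : Fin (2 ^ n) → ℝ)
    (hα : ∀ i, α i = Real.arccos (x i / maxEntry n x))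
    (ε : ℝ) (hε : 0 < ε) (t : ℤ)
    (ht : t = 2 * n + ⌈Real.logb 2 (Real.pi / ε)⌉)
    (αt : Fin (2 ^ n) → ℝ)
    (hαt : ∀ i, 0 ≤ αt i ∧ αt i ≤ α i ∧
      α i - αt i < Real.pi / (2 : ℝ) ^ (t + 1)) :
    (∑ i, x i ^ 2) / (2 ^ n * maxEntry n x ^ 2) ≤
      (1 / 2 ^ n) * ∑ i, Real.cos (αt i) ^ 2 ∧
    Real.sqrt (∑ i,
      (x i / Real.sqrt (∑ j, x j ^ 2) -
        Real.cos (αt i) / Real.sqrt (∑ j, Real.cos (αt j) ^ 2)) ^ 2) ≤ ε :=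
  probabilistic_preparation_general n x hx0 hxnn α hα ε hε t ht αt hαt
end
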